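/- arXiv:2310.03550 — 5 statements merged into one kernel-verified Lean document; each statement's English description precedes it below -/
import Mathlib

section
/- Let −∞ < b₁ ≤ b₂ < ∞ and −∞ < L₁ ≤ L₂ < ∞, let f: ℝ → ℝ be increasing with f(x) = b₁ for all x ≤ L₁ and f(x) = b₂ for all x ≥ L₂, and let γ > 0 and δ > 0. Then for all sufficiently large λ > 0, the set {(x,y) ∈ (L₁−δ, L₂+δ)² : |f(x)−f(y)| > λ|x−y|^{1+γ}} coincides with E_{γ,λ}(f,ℝ) = {(x,y) ∈ ℝ×ℝ : |f(x)−f(y)| > λ|x−y|^{1+γ}}. -/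
open MeasureTheory Filter Set
open scoped ENNReal Topology

/-- The measure `ν_γ` on `ℝ × ℝ`: `ν_γ(A) = ∬_A |x - y|^(γ-1) dy dx`. -/
noncomputable def nuG (γ : ℝ) (A : Set (ℝ × ℝ)) : ℝ≥0∞ :=
  ∫⁻ p in A, ENNReal.ofReal (|p.1 - p.2| ^ (γ - 1))

/-- The set `E_{γ,λ}(f,Ω) = {(x,y) ∈ Ω × Ω : |f(x) - f(y)| > λ |x - y|^(1+γ)}`. -/
def EG (γ lam : ℝ) (f : ℝ → ℝ) (Ω : Set ℝ) : Set (ℝ × ℝ) :=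
  {p | p.1 ∈ Ω ∧ p.2 ∈ Ω ∧ lam * |p.1 - p.2| ^ (1 + γ) < |f p.1 - f p.2|}

/-- The functional `F_{γ,λ}(f,Ω) = λ ν_γ(E_{γ,λ}(f,Ω))`. -/
noncomputable def FG (γ lam : ℝ) (f : ℝ → ℝ) (Ω : Set ℝ) : ℝ≥0∞ :=
  ENNReal.ofReal lam * nuG γ (EG γ lam f Ω)


/-- If `f : ℝ → ℝ` is increasing, equal to `b₁` on `(-∞, L₁]` and to `b₂` on `[L₂, ∞)`,
`γ > 0` and `δ > 0`, then for all sufficiently large `λ`, the set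
`{(x,y) ∈ (L₁-δ, L₂+δ)² : |f(x)-f(y)| > λ|x-y|^(1+γ)}` coincides with `E_{γ,λ}(f,ℝ)`. -/
theorem stmt3 (b₁ b₂ L₁ L₂ : ℝ) (hb : b₁ ≤ b₂) (hL : L₁ ≤ L₂)
    (f : ℝ → ℝ) (hf : Monotone f)
    (hf1 : ∀ x ≤ L₁, f x = b₁) (hf2 : ∀ x, L₂ ≤ x → f x = b₂)
    (γ δ : ℝ) (hγ : 0 < γ) (hδ : 0 < δ) :
    ∀ᶠ lam : ℝ in Filter.atTop,
      {p : ℝ × ℝ | p.1 ∈ Set.Ioo (L₁ - δ) (L₂ + δ) ∧ p.2 ∈ Set.Ioo (L₁ - δ) (L₂ + δ) ∧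
          lam * |p.1 - p.2| ^ (1 + γ) < |f p.1 - f p.2|}
        = EG γ lam f Set.univ := by
  have hfb : ∀ t, b₁ ≤ f t ∧ f t ≤ b₂ := by
    intro t
    constructor
    · rcases le_total t L₁ with h | h
      · exact (hf1 t h).ge
      · exact (hf1 L₁ le_rfl) ▸ hf h
    · rcases le_total L₂ t with h | h
      · exact (hf2 t h).le
      · exact (hf2 L₂ le_rfl) ▸ hf h
  have hexp : (0:ℝ) < 1 + γ := by linarith
  filter_upwards [Filter.eventually_ge_atTop (max 1 ((b₂ - b₁) / δ ^ (1 + γ)))]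
    with lam hlam
  have hlam1 : (1:ℝ) ≤ lam := le_trans (le_max_left _ _) hlam
  have hlam0 : (0:ℝ) < lam := lt_of_lt_of_le one_pos hlam1
  have hδpow : (0:ℝ) < δ ^ (1 + γ) := Real.rpow_pos_of_pos hδ _
  have hlamδ : b₂ - b₁ ≤ lam * δ ^ (1 + γ) := by
    have := le_trans (le_max_right 1 ((b₂ - b₁) / δ ^ (1 + γ))) hlam
    calc b₂ - b₁ = (b₂ - b₁) / δ ^ (1 + γ) * δ ^ (1 + γ) := by
          field_simp
      _ ≤ lam * δ ^ (1 + γ) := by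
          exact mul_le_mul_of_nonneg_right this hδpow.le
  -- key helper: the first coordinate must lie in the interval
  have key : ∀ x y : ℝ, lam * |x - y| ^ (1 + γ) < |f x - f y| →
      x ∈ Set.Ioo (L₁ - δ) (L₂ + δ) := by
    intro x y h
    have habs : |f x - f y| ≤ b₂ - b₁ := by
      rcases hfb x with ⟨h1x, h2x⟩
      rcases hfb y with ⟨h1y, h2y⟩
      rw [abs_le]; constructor <;> linarith
    by_contra hx
    simp only [Set.mem_Ioo, not_and_or, not_lt] at hx
    have contra : ∀ d : ℝ, δ < d → d ≤ |x - y| → False := by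
      intro d hd hd'
      have h1 : lam * δ ^ (1 + γ) < lam * |x - y| ^ (1 + γ) := by
        apply mul_lt_mul_of_pos_left _ hlam0
        exact Real.rpow_lt_rpow hδ.le (lt_of_lt_of_le hd hd') hexp
      linarith
    rcases hx with hx | hx
    · -- x ≤ L₁ - δ
      rcases le_or_gt y L₁ with hy | hy
      · rw [hf1 x (by linarith), hf1 y hy] at h
        simp at h
        have : 0 ≤ lam * |x - y| ^ (1 + γ) :=
          mul_nonneg hlam0.le (Real.rpow_nonneg (abs_nonneg _) _)
        linarith
      · exact contra (y - x) (by linarith) (by rw [abs_sub_comm]; exact le_abs_self _)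
    · -- L₂ + δ ≤ x
      rcases le_or_gt L₂ y with hy | hy
      · rw [hf2 x (by linarith), hf2 y hy] at h
        simp at h
        have : 0 ≤ lam * |x - y| ^ (1 + γ) :=
          mul_nonneg hlam0.le (Real.rpow_nonneg (abs_nonneg _) _)
        linarith
      · exact contra (x - y) (by linarith) (le_abs_self _)
  ext p
  simp only [EG, Set.mem_setOf_eq, Set.mem_univ, true_and]
  constructor
  · rintro ⟨_, _, h⟩; exact h
  · intro h
    refine ⟨key p.1 p.2 h, key p.2 p.1 ?_, h⟩
    rwa [abs_sub_comm, abs_sub_comm (f p.2)]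
end

section
/- Let γ > 0, λ > 0, a ∈ ℝ, and c > 0, and let f = c·𝟙_{[a,∞)}: ℝ → ℝ. Then λ ν_γ({(x,y) ∈ ℝ×ℝ : |f(x)−f(y)| > λ|x−y|^{1+γ}}) = (2/(γ+1))·c. -/
open MeasureTheory Filter Set
open scoped ENNReal Topology

/-! If `λ r ^ (1 + γ) = c`, a pair `(x, y)` lies in the set exactly when `|x - y| < r` and `a`
separates `x` from `y`. In the shear coordinates `t = x - y` the density `|t| ^ (γ - 1)` depends on
`t` alone and, for fixed `t`, the admissible `y` form an interval of length `|t|`, so the measure is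
`∫_{-r}^{r} |t| ^ γ dt = 2 r ^ (γ + 1) / (γ + 1) = 2 c / (λ (γ + 1))`. -/

theorem setLIntegral_prod_fst {α β : Type*} [MeasurableSpace α] [MeasurableSpace β]
    {μ : Measure α} {ν : Measure β} [SFinite ν] {T : Set (α × β)} (hT : MeasurableSet T)
    {h : α → ℝ≥0∞} (hh : Measurable h) :
    ∫⁻ q in T, h q.1 ∂μ.prod ν = ∫⁻ x, h x * ν (Prod.mk x ⁻¹' T) ∂μ := by
  rw [← withDensity_apply _ hT, ← prod_withDensity_left hh, Measure.prod_apply hT,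
    lintegral_withDensity_eq_lintegral_mul _ hh (measurable_measure_prodMk_left hT)]
  rfl

theorem nuG_preimage_sub_prod (γ : ℝ) {T : Set (ℝ × ℝ)} (hT : MeasurableSet T) :
    nuG γ ((fun p => (p.1 - p.2, p.2)) ⁻¹' T) =
      ∫⁻ t, ENNReal.ofReal (|t| ^ (γ - 1)) * volume (Prod.mk t ⁻¹' T) := by
  have hg : Measurable fun t : ℝ => ENNReal.ofReal (|t| ^ (γ - 1)) := by fun_prop
  rw [nuG, ← setLIntegral_prod_fst hT hg, Measure.volume_eq_prod]
  exact (measurePreserving_sub_prod volume volume).setLIntegral_comp_preimage hT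
    (hg.comp measurable_fst)

theorem volume_setOf_add_mem_Ici_iff_notMem (a t : ℝ) :
    volume {y : ℝ | t + y ∈ Ici a ↔ y ∉ Ici a} = ENNReal.ofReal |t| := by
  rcases le_total 0 t with ht | ht
  · have : {y : ℝ | t + y ∈ Ici a ↔ y ∉ Ici a} = Ico (a - t) a := by
      ext y; simp only [mem_Ici, mem_ofPred_eq, mem_Ico, not_le]
      grind
    rw [this, Real.volume_Ico, abs_of_nonneg ht, sub_sub_cancel]
  · have : {y : ℝ | t + y ∈ Ici a ↔ y ∉ Ici a} = Ico a (a - t) := by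
      ext y; simp only [mem_Ici, mem_ofPred_eq, mem_Ico, not_le]
      grind
    rw [this, Real.volume_Ico, abs_of_nonpos ht, sub_sub_cancel_left]

theorem integral_abs_rpow_symm {γ : ℝ} (hγ : 0 < γ) {r : ℝ} (hr : 0 ≤ r) :
    ∫ t in -r..r, |t| ^ γ = 2 * (r ^ (γ + 1) / (γ + 1)) := by
  have hint : ∀ a b : ℝ, IntervalIntegrable (fun t : ℝ => |t| ^ γ) volume a b := fun a b =>
    ((Real.continuous_rpow_const hγ.le).comp continuous_abs).intervalIntegrable a b
  have hhalf : ∫ t in (0)..r, |t| ^ γ = r ^ (γ + 1) / (γ + 1) := by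
    rw [intervalIntegral.integral_congr (g := fun t => t ^ γ),
      integral_rpow (Or.inl (by linarith)), Real.zero_rpow (by linarith), sub_zero]
    intro t ht
    rw [uIcc_of_le hr] at ht
    simp [abs_of_nonneg ht.1]
  rw [← intervalIntegral.integral_add_adjacent_intervals (hint _ 0) (hint 0 _), two_mul, hhalf,
    ← hhalf]
  simpa using (intervalIntegral.integral_comp_neg (a := 0) (b := r) fun t => |t| ^ γ).symm

theorem lintegral_Ioo_abs_rpow {γ : ℝ} (hγ : 0 < γ) {r : ℝ} (hr : 0 ≤ r) :
    ∫⁻ t in Ioo (-r) r, ENNReal.ofReal (|t| ^ γ) =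
      ENNReal.ofReal (2 * (r ^ (γ + 1) / (γ + 1))) := by
  rw [← integral_abs_rpow_symm hγ hr, intervalIntegral.integral_of_le (by linarith),
    integral_Ioc_eq_integral_Ioo, ofReal_integral_eq_lintegral_ofReal]
  · exact ((Real.continuous_rpow_const hγ.le).comp continuous_abs).integrableOn_Icc.mono_set
      Ioo_subset_Icc_self
  · exact Eventually.of_forall fun t => by positivity

theorem nuG_straddling_Ici {γ : ℝ} (hγ : 0 < γ) (a : ℝ) {r : ℝ} (hr : 0 ≤ r) :
    nuG γ {p | |p.1 - p.2| < r ∧ (p.1 ∈ Ici a ↔ p.2 ∉ Ici a)} =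
      ENNReal.ofReal (2 * (r ^ (γ + 1) / (γ + 1))) := by
  set T : Set (ℝ × ℝ) := {q | |q.1| < r ∧ (q.1 + q.2 ∈ Ici a ↔ q.2 ∉ Ici a)}
  have hT : MeasurableSet T := by measurability
  have hE : {p : ℝ × ℝ | |p.1 - p.2| < r ∧ (p.1 ∈ Ici a ↔ p.2 ∉ Ici a)} =
      (fun p => (p.1 - p.2, p.2)) ⁻¹' T := by
    ext p; simp [T]
  rw [hE, nuG_preimage_sub_prod γ hT, ← lintegral_Ioo_abs_rpow hγ hr,
    ← lintegral_indicator measurableSet_Ioo]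
  congr 1; funext t
  by_cases ht : t ∈ Ioo (-r) r
  · have hsection : Prod.mk t ⁻¹' T = {y | t + y ∈ Ici a ↔ y ∉ Ici a} := by
      ext y; simp [T, abs_lt.mpr ht]
    rw [indicator_of_mem ht, hsection, volume_setOf_add_mem_Ici_iff_notMem,
      ← ENNReal.ofReal_mul (by positivity), ← Real.rpow_add_one' (abs_nonneg t) (by linarith),
      sub_add_cancel]
  · have hsection : Prod.mk t ⁻¹' T = ∅ := by
      have : ¬ |t| < r := fun h => ht (abs_lt.mp h)
      ext y; simp [T, this]
    simp [ht, hsection]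

theorem EG_indicator_const {γ lam c : ℝ} (hγ : -1 < γ) (hlam : 0 < lam) (hc : 0 < c)
    (A : Set ℝ) :
    EG γ lam (A.indicator fun _ => c) univ =
      {p | |p.1 - p.2| < (c / lam) ^ (1 + γ)⁻¹ ∧ (p.1 ∈ A ↔ p.2 ∉ A)} := by
  have hjump : ∀ d : ℝ, 0 ≤ d → (lam * d ^ (1 + γ) < c ↔ d < (c / lam) ^ (1 + γ)⁻¹) :=
    fun d hd => by
      rw [Real.lt_rpow_inv_iff_of_pos hd (by positivity) (by linarith), lt_div_iff₀ hlam, mul_comm]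
  ext ⟨x, y⟩
  have hpos : 0 ≤ lam * |x - y| ^ (1 + γ) := by positivity
  by_cases hx : x ∈ A <;> by_cases hy : y ∈ A <;>
    simp [EG, hx, hy, abs_of_pos hc, hjump _ (abs_nonneg _), hpos.not_gt]

/-- For `γ, λ > 0`, `a ∈ ℝ`, `c > 0`, and `f = c·𝟙_{[a,∞)}`, one has
`λ ν_γ({(x,y) : |f(x)-f(y)| > λ|x-y|^(1+γ)}) = (2/(γ+1))·c`. -/
theorem stmt7 (γ lam a c : ℝ) (hγ : 0 < γ) (hlam : 0 < lam) (hc : 0 < c) :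
    ENNReal.ofReal lam *
      nuG γ (EG γ lam (Set.indicator (Set.Ici a) fun _ => c) Set.univ)
      = ENNReal.ofReal (2 / (γ + 1) * c) := by
  have hr : ((c / lam) ^ (1 + γ)⁻¹) ^ (γ + 1) = c / lam := by
    rw [add_comm γ 1]; exact Real.rpow_inv_rpow (by positivity) (by positivity)
  rw [EG_indicator_const (by linarith) hlam hc, nuG_straddling_Ici hγ a (by positivity), hr,
    ← ENNReal.ofReal_mul hlam.le]
  congr 1
  field_simp
end

section
/- Let γ > 0, λ > 0, c > 0, and let a < b be real numbers with (c/λ)^{1/(1+γ)} ≥ b − a. Then ν_γ({(x,y) : x ≤ a, y ≥ b, c > λ(y−x)^{1+γ}}) = c/(λ(γ+1)) − (1/γ)·(b−a)·(c/λ)^{γ/(1+γ)} + (1/(γ(γ+1)))·(b−a)^{γ+1}. -/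
open MeasureTheory Filter Set
open scoped ENNReal Topology

/-!
With `R = (c/λ)^(1/(1+γ))` the set is `{x ≤ a, b ≤ y, y - x < R}`. The shear
`(x, y) ↦ (x, y - x)` preserves Lebesgue measure, and for a fixed difference `t = y - x < R` the
admissible `x` fill the interval `[b - t, a]` of length `t - (b - a)`. Hence the measure is the
one-variable integral `∫_{b-a}^R (t - (b - a)) t^(γ-1) dt`.
-/

theorem lintegral_comp_sub_fst {G : Type*} [MeasurableSpace G] [AddCommGroup G]
    [MeasurableAdd₂ G] [MeasurableNeg G]
    (μ ν : Measure G) [SFinite μ] [SFinite ν] [ν.IsAddLeftInvariant]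
    {F : G × G → ℝ≥0∞} (hF : Measurable F) :
    ∫⁻ p, F (p.1, p.2 - p.1) ∂μ.prod ν = ∫⁻ t, ∫⁻ x, F (x, t) ∂μ ∂ν := by
  rw [← (measurePreserving_prod_add μ ν).lintegral_comp (by fun_prop)]
  simp only [add_sub_cancel_left]
  exact lintegral_prod_symm' F hF

theorem setOf_mul_rpow_lt_eq {p lam c a b : ℝ} (hp : 0 < p) (hlam : 0 < lam) (hc : 0 ≤ c)
    (hab : a ≤ b) :
    {q : ℝ × ℝ | q.1 ≤ a ∧ b ≤ q.2 ∧ lam * (q.2 - q.1) ^ p < c}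
      = (Iic a ×ˢ Ici b) ∩ {q | q.2 - q.1 < (c / lam) ^ (1 / p)} := by
  ext ⟨x, y⟩
  simp only [mem_ofPred_eq, mem_inter_iff, mem_prod, mem_Iic, mem_Ici, and_assoc]
  refine and_congr_right fun hx => and_congr_right fun hy => ?_
  rw [one_div, Real.lt_rpow_inv_iff_of_pos (by linarith) (div_nonneg hc hlam.le) hp,
    lt_div_iff₀' hlam]

theorem setLIntegral_Iic_prod_Ici_inter_comp_sub {k : ℝ → ℝ≥0∞} (hk : Measurable k)
    (a b R : ℝ) :
    ∫⁻ p in (Iic a ×ˢ Ici b) ∩ {p | p.2 - p.1 < R}, k (p.2 - p.1)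
      = ∫⁻ t in Iio R, ENNReal.ofReal (t - (b - a)) * k t := by
  set S := (Iic a ×ˢ Ici b) ∩ {p : ℝ × ℝ | p.2 - p.1 < R}
  set T := {q : ℝ × ℝ | q.1 ≤ a ∧ b ≤ q.1 + q.2 ∧ q.2 < R}
  have hS : MeasurableSet S :=
    (measurableSet_Iic.prod measurableSet_Ici).inter
      (measurableSet_lt (by fun_prop) measurable_const)
  have hT : MeasurableSet T :=
    (measurableSet_le measurable_fst measurable_const).inter
      ((measurableSet_le measurable_const (measurable_fst.add measurable_snd)).inter
        (measurableSet_lt measurable_snd measurable_const))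
  have hST : ∀ p : ℝ × ℝ, S.indicator (fun p => k (p.2 - p.1)) p
      = T.indicator (fun q => k q.2) (p.1, p.2 - p.1) := by
    rintro ⟨x, y⟩
    simp [S, T, indicator_apply, and_assoc]
  have hslice : ∀ t, ∫⁻ x, T.indicator (fun q => k q.2) (x, t)
      = (Iio R).indicator (fun t => ENNReal.ofReal (t - (b - a)) * k t) t := by
    intro t
    have hT_slice : ∀ x, T.indicator (fun q => k q.2) (x, t)
        = (Iio R).indicator (fun _ => (Icc (b - t) a).indicator (fun _ => k t) x) t := by
      intro x
      simp only [T, indicator_apply, mem_ofPred_eq, mem_Iio, mem_Icc, sub_le_iff_le_add]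
      split_ifs <;> grind
    by_cases ht : t < R
    · simp only [hT_slice, mem_Iio, ht, indicator_of_mem,
        lintegral_indicator_const measurableSet_Icc, Real.volume_Icc, mul_comm]
      congr 2
      ring
    · simp [hT_slice, ht]
  rw [← lintegral_indicator hS, Measure.volume_eq_prod, ← lintegral_indicator measurableSet_Iio]
  simp only [hST]
  rw [lintegral_comp_sub_fst (F := T.indicator fun q => k q.2) _ _
    ((hk.comp measurable_snd).indicator hT)]
  simp only [hslice]

theorem sub_mul_rpow_sub_one {γ t : ℝ} (hγ : γ ≠ 0) (ht : 0 ≤ t) (d : ℝ) :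
    (t - d) * t ^ (γ - 1) = t ^ γ - d * t ^ (γ - 1) := by
  have h := Real.rpow_add_one' ht (show γ - 1 + 1 ≠ 0 by simpa using hγ)
  rw [sub_add_cancel] at h
  rw [h]
  ring

theorem integral_sub_mul_rpow_sub_one {γ d R : ℝ} (hγ : 0 < γ) (hd : 0 ≤ d) (hR : 0 ≤ R) :
    ∫ t in d..R, (t - d) * t ^ (γ - 1)
      = (R ^ (γ + 1) - d ^ (γ + 1)) / (γ + 1) - d * (R ^ γ - d ^ γ) / γ := by
  have hnonneg : ∀ t ∈ uIcc d R, 0 ≤ t := fun t ht => le_trans (le_min hd hR) ht.1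
  rw [intervalIntegral.integral_congr fun t ht => sub_mul_rpow_sub_one hγ.ne' (hnonneg t ht) d,
    intervalIntegral.integral_sub (intervalIntegral.intervalIntegrable_rpow' (by linarith))
      ((intervalIntegral.intervalIntegrable_rpow' (by linarith)).const_mul d),
    intervalIntegral.integral_const_mul, integral_rpow (Or.inl (by linarith)),
    integral_rpow (Or.inl (by linarith)), sub_add_cancel]
  ring

theorem setLIntegral_Iio_ofReal_sub_mul_abs_rpow {γ d R : ℝ} (hγ : 0 < γ) (hd : 0 ≤ d)
    (hdR : d ≤ R) :
    ∫⁻ t in Iio R, ENNReal.ofReal (t - d) * ENNReal.ofReal (|t| ^ (γ - 1))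
      = ENNReal.ofReal ((R ^ (γ + 1) - d ^ (γ + 1)) / (γ + 1) - d * (R ^ γ - d ^ γ) / γ) := by
  have hpos : ∀ t ∈ Ioc d R, 0 < t := fun t ht => hd.trans_lt ht.1
  have hint : IntegrableOn (fun t => (t - d) * t ^ (γ - 1)) (Ioc d R) :=
    (((intervalIntegral.intervalIntegrable_rpow' (by linarith)).continuousOn_mul
      (continuous_id.sub continuous_const).continuousOn)).1
  have hnn : 0 ≤ᵐ[volume.restrict (Ioc d R)] fun t => (t - d) * t ^ (γ - 1) :=
    (ae_restrict_iff' measurableSet_Ioc).2 <| ae_of_all _ fun t ht =>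
      mul_nonneg (sub_nonneg.2 ht.1.le) (Real.rpow_nonneg (hpos t ht).le _)
  rw [setLIntegral_congr Iio_ae_eq_Iic, ← Iic_union_Ioc_eq_Iic hdR,
    lintegral_union measurableSet_Ioc (Iic_disjoint_Ioc le_rfl),
    setLIntegral_congr_fun measurableSet_Iic fun t (ht : t ≤ d) => by
      rw [ENNReal.ofReal_of_nonpos (sub_nonpos.2 ht), zero_mul],
    lintegral_zero, zero_add,
    setLIntegral_congr_fun measurableSet_Ioc fun t ht => by
      rw [← ENNReal.ofReal_mul (sub_nonneg.2 ht.1.le), abs_of_pos (hpos t ht)],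
    ← ofReal_integral_eq_lintegral_ofReal hint hnn, ← intervalIntegral.integral_of_le hdR,
    integral_sub_mul_rpow_sub_one hγ hd (hd.trans hdR)]

/-- Let `γ, λ > 0`, `c > 0`, and `a < b` with `(c/λ)^(1/(1+γ)) ≥ b - a`. Then
`ν_γ({(x,y) : x ≤ a, y ≥ b, c > λ(y-x)^(1+γ)})
  = c/(λ(γ+1)) - (1/γ)(b-a)(c/λ)^(γ/(1+γ)) + (1/(γ(γ+1)))(b-a)^(γ+1)`. -/
theorem stmt8 (γ lam c a b : ℝ) (hγ : 0 < γ) (hlam : 0 < lam) (hc : 0 < c)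
    (hab : a < b) (h : b - a ≤ (c / lam) ^ (1 / (1 + γ))) :
    nuG γ {p : ℝ × ℝ | p.1 ≤ a ∧ b ≤ p.2 ∧ lam * (p.2 - p.1) ^ (1 + γ) < c}
      = ENNReal.ofReal (c / (lam * (γ + 1))
          - (1 / γ) * (b - a) * (c / lam) ^ (γ / (1 + γ))
          + (1 / (γ * (γ + 1))) * (b - a) ^ (γ + 1)) := by
  have hr : 0 ≤ c / lam := div_nonneg hc.le hlam.le
  have hk : Measurable fun t : ℝ => ENNReal.ofReal (|t| ^ (γ - 1)) := by fun_prop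
  rw [nuG, setOf_mul_rpow_lt_eq (by linarith) hlam hc.le hab.le]
  simp_rw [abs_sub_comm _ (Prod.snd _)]
  rw [setLIntegral_Iic_prod_Ici_inter_comp_sub hk,
    setLIntegral_Iio_ofReal_sub_mul_abs_rpow hγ (sub_nonneg.2 hab.le) h]
  congr 1
  have hR_pow_succ : ((c / lam) ^ (1 / (1 + γ))) ^ (γ + 1) = c / lam := by
    rw [← Real.rpow_mul hr, add_comm, one_div_mul_cancel (by linarith), Real.rpow_one]
  have hR_pow : ((c / lam) ^ (1 / (1 + γ))) ^ γ = (c / lam) ^ (γ / (1 + γ)) := by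
    rw [← Real.rpow_mul hr, one_div_mul_eq_div]
  have hd_pow_succ : (b - a) * (b - a) ^ γ = (b - a) ^ (γ + 1) := by
    rw [Real.rpow_add_one' (sub_nonneg.2 hab.le) (by linarith), mul_comm]
  rw [hR_pow_succ, hR_pow, ← hd_pow_succ]
  field_simp
  ring
end

section
/- Let γ > 0, let 0 < λ < λ₀ < ∞, let −∞ < L₁ ≤ L₂ < ∞, and let f, f¹, f², … : ℝ → ℝ be increasing functions, each equal to 0 on (−∞, L₁) and equal to 1 on (L₂, ∞), with ‖fⁱ − f‖_{L^∞(ℝ)} → 0 as i → ∞. Then λ ν_γ({(x,y) : |f(x)−f(y)| ≥ λ₀ |x−y|^{1+γ}}) ≥ limsup_{i→∞} λ ν_γ({(x,y) : |fⁱ(x)−fⁱ(y)| ≥ λ₀ |x−y|^{1+γ}}), and consequently F_{γ,λ}(f,ℝ) ≥ limsup_{i→∞} λ ν_γ({(x,y) : |fⁱ(x)−fⁱ(y)| ≥ λ₀ |x−y|^{1+γ}}). -/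
open MeasureTheory Filter Set
open scoped ENNReal Topology

/-! Uniform convergence gives, for each `ε > 0` and all large `i`,
`{λ₀|x-y|^(1+γ) ≤ |fⁱ(x)-fⁱ(y)|} ⊆ {λ₀|x-y|^(1+γ) ≤ |f(x)-f(y)| + ε}`. Off the `ν_γ`-null
diagonal these sets lie in one strip `|x - y| ≤ λ₀^(-1/(1+γ))` over a bounded interval, because
each `fⁱ` takes values in `[0, 1]` and is constant outside `[L₁, L₂]`; this strip has finite
`ν_γ`-measure since `|t|^(γ-1)` is integrable near `0`. Continuity of `ν_γ` from above as `ε ↓ 0`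
gives the first inequality. Since `λ < λ₀`, the set in it lies in `E_{γ,λ}(f,ℝ)` up to the
diagonal, which gives the second. -/

theorem intervalIntegrable_abs_rpow {r : ℝ} (hr : -1 < r) (a b : ℝ) :
    IntervalIntegrable (fun t : ℝ => |t| ^ r) volume a b := by
  have hpos : ∀ c : ℝ, 0 ≤ c → IntervalIntegrable (fun t : ℝ => |t| ^ r) volume 0 c := by
    intro c hc
    refine (intervalIntegral.intervalIntegrable_rpow' hr).congr_ae ?_
    filter_upwards [ae_restrict_mem measurableSet_uIoc] with t ht
    rw [uIoc_of_le hc] at ht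
    simp [abs_of_pos ht.1]
  have hall : ∀ c : ℝ, IntervalIntegrable (fun t : ℝ => |t| ^ r) volume 0 c := by
    intro c
    rcases le_total 0 c with hc | hc
    · exact hpos c hc
    · simpa using (IntervalIntegrable.iff_comp_neg (by simp)).mp (hpos (-c) (neg_nonneg.mpr hc))
  exact (hall a).symm.trans (hall b)

noncomputable def nuMeasure (γ : ℝ) : Measure (ℝ × ℝ) :=
  volume.withDensity fun p => ENNReal.ofReal (|p.1 - p.2| ^ (γ - 1))

theorem nuG_eq_nuMeasure (γ : ℝ) : nuG γ = nuMeasure γ :=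
  funext fun A => (withDensity_apply' _ A).symm

theorem Real.volume_diagonal : (volume : Measure (ℝ × ℝ)) (diagonal ℝ) = 0 := by
  rw [Measure.volume_eq_prod, Measure.prod_apply measurableSet_diagonal]
  simp [preimage, diagonal]

theorem nuMeasure_diagonal (γ : ℝ) : nuMeasure γ (diagonal ℝ) = 0 :=
  withDensity_absolutelyContinuous _ _ Real.volume_diagonal

theorem ae_ne_nuMeasure (γ : ℝ) : ∀ᵐ p ∂nuMeasure γ, p.1 ≠ p.2 :=
  measure_eq_zero_iff_ae_notMem.mp (nuMeasure_diagonal γ)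

def strip (a b R : ℝ) : Set (ℝ × ℝ) :=
  {p | p.1 ∈ Icc a b ∧ |p.1 - p.2| ≤ R}

theorem measurableSet_strip (a b R : ℝ) : MeasurableSet (strip a b R) :=
  (measurable_fst measurableSet_Icc).inter
    (measurableSet_le (f := fun p : ℝ × ℝ => |p.1 - p.2|) (by fun_prop) measurable_const)

theorem nuMeasure_strip_lt_top {γ : ℝ} (hγ : 0 < γ) (a b R : ℝ) :
    nuMeasure γ (strip a b R) < ⊤ := by
  set g : ℝ → ℝ≥0∞ := fun t => ENNReal.ofReal (|t| ^ (γ - 1))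
  have hg : Measurable g := by fun_prop
  have hS : strip a b R = (fun z : ℝ × ℝ => (z.1, z.2 - z.1)) ⁻¹' (Icc a b ×ˢ Icc (-R) R) := by
    ext p
    simp only [strip, mem_ofPred_eq, mem_preimage, mem_prod, mem_Icc, abs_le]
    constructor <;> rintro ⟨h₁, h₂, h₃⟩ <;> exact ⟨h₁, by linarith, by linarith⟩
  have hK : ∫⁻ t in Icc (-R) R, g t < ⊤ :=
    ((((intervalIntegrable_iff' (by simp)).mp
      (intervalIntegrable_abs_rpow (by linarith : -1 < γ - 1) (-R) R)).mono_set
      Icc_subset_uIcc).ofReal).lintegral_lt_top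
  -- the shear `(x, y) ↦ (x, y - x)` maps the strip onto a rectangle
  calc nuMeasure γ _
      = ∫⁻ z in (fun z : ℝ × ℝ => (z.1, z.2 - z.1)) ⁻¹' (Icc a b ×ˢ Icc (-R) R),
          g (z.1, z.2 - z.1).2 ∂(volume.prod volume) := by
        rw [nuMeasure, withDensity_apply', hS, Measure.volume_eq_prod]
        simp only [g, abs_sub_comm]
    _ = ∫⁻ x in Icc a b, ∫⁻ t in Icc (-R) R, g t := by
        rw [(measurePreserving_prod_sub volume volume).setLIntegral_comp_preimage
          (f := fun q : ℝ × ℝ => g q.2) (measurableSet_Icc.prod measurableSet_Icc)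
          (hg.comp measurable_snd),
          setLIntegral_prod (fun q : ℝ × ℝ => g q.2) (hg.comp measurable_snd).aemeasurable]
    _ = volume (Icc a b) * ∫⁻ t in Icc (-R) R, g t := by
        rw [setLIntegral_const, mul_comm]
    _ < ⊤ := ENNReal.mul_lt_top (by simp) hK

theorem limsup_measure_setOf_le_le_of_tendstoUniformly {α ι : Type*} [MeasurableSpace α]
    {μ : Measure α} {l : Filter ι} {φ g : α → ℝ} {G : ι → α → ℝ}
    (hφ : Measurable φ) (hg : Measurable g) (hG : TendstoUniformly G g l)
    {S : Set α} (hS : MeasurableSet S) (hSμ : μ S ≠ ⊤)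
    (hGS : ∀ i, {x | φ x ≤ G i x} ≤ᵐ[μ] S) :
    limsup (fun i => μ {x | φ x ≤ G i x}) l ≤ μ {x | φ x ≤ g x} := by
  set C : ℕ → Set α := fun n => {x | φ x ≤ g x + 1 / (n + 1)} ∩ S
  have hC : ∀ n, MeasurableSet (C n) := fun n =>
    (measurableSet_le hφ (hg.add_const _)).inter hS
  have hanti : Antitone C := fun m n hmn x ⟨hx, hxS⟩ =>
    ⟨show φ x ≤ _ from le_trans hx (add_le_add_right (Nat.one_div_le_one_div hmn) _), hxS⟩
  have hlimsup_le : ∀ n, limsup (fun i => μ {x | φ x ≤ G i x}) l ≤ μ (C n) := by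
    intro n
    refine limsup_le_of_le (by isBoundedDefault) ?_
    filter_upwards [Metric.tendstoUniformly_iff.mp hG _ (Nat.one_div_pos_of_nat (n := n))] with i hi
    refine measure_mono_ae ((hGS i).mono fun x hxS hx => ⟨?_, hxS hx⟩)
    change φ x ≤ G i x at hx
    change φ x ≤ g x + 1 / (n + 1)
    exact hx.trans (sub_lt_iff_lt_add'.mp (abs_sub_lt_iff.mp (hi x)).2).le
  have hInter : (⋂ n, C n) ⊆ {x | φ x ≤ g x} := by
    intro x hx
    show φ x ≤ g x
    refine le_of_forall_pos_le_add fun ε hε => ?_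
    obtain ⟨n, hn⟩ := exists_nat_one_div_lt hε
    have hxn : φ x ≤ g x + 1 / (n + 1) := (mem_iInter.mp hx n).1
    exact hxn.trans (add_le_add_right hn.le _)
  calc limsup (fun i => μ {x | φ x ≤ G i x}) l
      ≤ μ (⋂ n, C n) :=
        ge_of_tendsto (tendsto_measure_iInter_atTop (fun n => (hC n).nullMeasurableSet) hanti
          ⟨0, ne_top_of_le_ne_top hSμ (measure_mono inter_subset_right)⟩)
          (Eventually.of_forall hlimsup_le)
    _ ≤ μ {x | φ x ≤ g x} := measure_mono hInter

theorem TendstoUniformly.dist_prodMap {ι α β : Type*} [PseudoMetricSpace β] {F : ι → α → β}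
    {f : α → β} {l : Filter ι} (h : TendstoUniformly F f l) :
    TendstoUniformly (fun i p => dist (F i p.1) (F i p.2)) (fun p : α × α => dist (f p.1) (f p.2))
      l :=
  fun u hu => ((uniformContinuous_dist.comp_tendstoUniformly (h.prodMap h)) u hu).diag_of_prod

theorem mem_Icc_zero_one_of_monotone {L₁ L₂ : ℝ} {h : ℝ → ℝ} (hh : Monotone h)
    (h0 : ∀ x < L₁, h x = 0) (h1 : ∀ x, L₂ < x → h x = 1) (x : ℝ) : h x ∈ Icc 0 1 := by
  constructor
  · simpa [h0 (min x L₁ - 1) (by linarith [min_le_right x L₁])] using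
      hh (show min x L₁ - 1 ≤ x by linarith [min_le_left x L₁])
  · simpa [h1 (max x L₂ + 1) (by linarith [le_max_right x L₂])] using
      hh (show x ≤ max x L₂ + 1 by linarith [le_max_left x L₂])

theorem mem_Icc_sub_abs_of_apply_ne {L₁ L₂ a b : ℝ} {h : ℝ → ℝ} (h0 : ∀ x < L₁, h x = a)
    (h1 : ∀ x, L₂ < x → h x = b) {x y : ℝ} (hxy : h x ≠ h y) :
    x ∈ Icc (L₁ - |x - y|) (L₂ + |x - y|) := by
  have hy := abs_sub_le_iff.mp (le_refl |x - y|)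
  constructor <;> by_contra! hx
  · exact hxy ((h0 x (by linarith [abs_nonneg (x - y)])).trans (h0 y (by linarith)).symm)
  · exact hxy ((h1 x (by linarith [abs_nonneg (x - y)])).trans (h1 y (by linarith)).symm)

theorem mem_strip_of_mul_rpow_le_dist {γ lam₀ L₁ L₂ : ℝ} (hγ : -1 < γ) (hlam₀ : 0 < lam₀)
    {h : ℝ → ℝ} (hh : ∀ x, h x ∈ Icc 0 1) (h0 : ∀ x < L₁, h x = 0)
    (h1 : ∀ x, L₂ < x → h x = 1) {x y : ℝ} (hxy : x ≠ y)
    (hle : lam₀ * |x - y| ^ (1 + γ) ≤ dist (h x) (h y)) :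
    (x, y) ∈ strip (L₁ - (1 / lam₀) ^ (1 + γ)⁻¹) (L₂ + (1 / lam₀) ^ (1 + γ)⁻¹)
      ((1 / lam₀) ^ (1 + γ)⁻¹) := by
  have hpos : 0 < lam₀ * |x - y| ^ (1 + γ) := by
    have := abs_pos.mpr (sub_ne_zero.mpr hxy)
    positivity
  have hR : |x - y| ≤ (1 / lam₀) ^ (1 + γ)⁻¹ := by
    rw [Real.le_rpow_inv_iff_of_pos (abs_nonneg _) (by positivity) (by linarith),
      le_div_iff₀' hlam₀]
    exact hle.trans (Real.dist_le_of_mem_Icc_01 (hh x) (hh y))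
  have hne : h x ≠ h y := dist_pos.mp (hpos.trans_le hle)
  exact ⟨Icc_subset_Icc (by linarith) (by linarith) (mem_Icc_sub_abs_of_apply_ne h0 h1 hne), hR⟩

theorem setOf_mul_rpow_le_ae_le_EG {γ lam lam₀ : ℝ} (hlam : lam < lam₀) (f : ℝ → ℝ) :
    {p : ℝ × ℝ | lam₀ * |p.1 - p.2| ^ (1 + γ) ≤ |f p.1 - f p.2|} ≤ᵐ[nuMeasure γ]
      EG γ lam f univ := by
  filter_upwards [ae_ne_nuMeasure γ] with p hp hle
  have hd : 0 < |p.1 - p.2| ^ (1 + γ) := by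
    have := abs_pos.mpr (sub_ne_zero.mpr hp)
    positivity
  exact ⟨trivial, trivial, (mul_lt_mul_of_pos_right hlam hd).trans_le hle⟩

theorem stmt12_general (γ lam lam₀ : ℝ) (hγ : 0 < γ) (hlam : 0 < lam) (hlam₀ : lam < lam₀)
    (L₁ L₂ : ℝ)
    (f : ℝ → ℝ) (fi : ℕ → ℝ → ℝ)
    (hf : Monotone f) (hfi : ∀ i, Monotone (fi i))
    (hfi0 : ∀ i, ∀ x < L₁, fi i x = 0) (hfi1 : ∀ i, ∀ x, L₂ < x → fi i x = 1)
    (hconv : TendstoUniformly fi f Filter.atTop) :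
    Filter.limsup (fun i : ℕ =>
        ENNReal.ofReal lam * nuG γ
          {p : ℝ × ℝ | lam₀ * |p.1 - p.2| ^ (1 + γ) ≤ |fi i p.1 - fi i p.2|}) Filter.atTop ≤
      ENNReal.ofReal lam * nuG γ
        {p : ℝ × ℝ | lam₀ * |p.1 - p.2| ^ (1 + γ) ≤ |f p.1 - f p.2|} ∧
    Filter.limsup (fun i : ℕ =>
        ENNReal.ofReal lam * nuG γ
          {p : ℝ × ℝ | lam₀ * |p.1 - p.2| ^ (1 + γ) ≤ |fi i p.1 - fi i p.2|}) Filter.atTop ≤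
      FG γ lam f Set.univ := by
  set R := (1 / lam₀) ^ (1 + γ)⁻¹
  have hstrip : ∀ i, {p : ℝ × ℝ | lam₀ * |p.1 - p.2| ^ (1 + γ) ≤ dist (fi i p.1) (fi i p.2)}
      ≤ᵐ[nuMeasure γ] strip (L₁ - R) (L₂ + R) R := fun i =>
    (ae_ne_nuMeasure γ).mono fun p hp => mem_strip_of_mul_rpow_le_dist (by linarith)
      (hlam.trans hlam₀) (mem_Icc_zero_one_of_monotone (hfi i) (hfi0 i) (hfi1 i)) (hfi0 i)
      (hfi1 i) hp
  have hfm : Measurable f := hf.measurable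
  have hφ : Measurable fun p : ℝ × ℝ => lam₀ * |p.1 - p.2| ^ (1 + γ) := by fun_prop
  have hg : Measurable fun p : ℝ × ℝ => dist (f p.1) (f p.2) := by fun_prop
  have hlimsup := limsup_measure_setOf_le_le_of_tendstoUniformly hφ hg hconv.dist_prodMap
    (measurableSet_strip _ _ R) (nuMeasure_strip_lt_top hγ _ _ R).ne hstrip
  simp only [Real.dist_eq] at hlimsup
  have hmain : Filter.limsup (fun i : ℕ => ENNReal.ofReal lam * nuG γ
        {p : ℝ × ℝ | lam₀ * |p.1 - p.2| ^ (1 + γ) ≤ |fi i p.1 - fi i p.2|}) Filter.atTop ≤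
      ENNReal.ofReal lam * nuG γ
        {p : ℝ × ℝ | lam₀ * |p.1 - p.2| ^ (1 + γ) ≤ |f p.1 - f p.2|} := by
    rw [ENNReal.limsup_const_mul_of_ne_top ENNReal.ofReal_ne_top, nuG_eq_nuMeasure]
    gcongr
  refine ⟨hmain, hmain.trans ?_⟩
  rw [FG, nuG_eq_nuMeasure]
  gcongr 1
  exact measure_mono_ae (setOf_mul_rpow_le_ae_le_EG hlam₀ f)

/-- Let `γ > 0`, `0 < λ < λ₀ < ∞`, `L₁ ≤ L₂`, and let `f, f¹, f², … : ℝ → ℝ` be increasing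
functions, each equal to `0` on `(-∞, L₁)` and to `1` on `(L₂, ∞)`, with `fⁱ → f` uniformly.
Then `λ ν_γ({|f(x)-f(y)| ≥ λ₀|x-y|^(1+γ)}) ≥ limsup_i λ ν_γ({|fⁱ(x)-fⁱ(y)| ≥ λ₀|x-y|^(1+γ)})`,
and consequently `F_{γ,λ}(f,ℝ)` is at least this limsup. -/
theorem stmt12 (γ lam lam₀ : ℝ) (hγ : 0 < γ) (hlam : 0 < lam) (hlam₀ : lam < lam₀)
    (L₁ L₂ : ℝ) (hL : L₁ ≤ L₂)
    (f : ℝ → ℝ) (fi : ℕ → ℝ → ℝ)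
    (hf : Monotone f) (hfi : ∀ i, Monotone (fi i))
    (hf0 : ∀ x < L₁, f x = 0) (hf1 : ∀ x, L₂ < x → f x = 1)
    (hfi0 : ∀ i, ∀ x < L₁, fi i x = 0) (hfi1 : ∀ i, ∀ x, L₂ < x → fi i x = 1)
    (hconv : TendstoUniformly fi f Filter.atTop) :
    Filter.limsup (fun i : ℕ =>
        ENNReal.ofReal lam * nuG γ
          {p : ℝ × ℝ | lam₀ * |p.1 - p.2| ^ (1 + γ) ≤ |fi i p.1 - fi i p.2|}) Filter.atTop ≤
      ENNReal.ofReal lam * nuG γ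
        {p : ℝ × ℝ | lam₀ * |p.1 - p.2| ^ (1 + γ) ≤ |f p.1 - f p.2|} ∧
    Filter.limsup (fun i : ℕ =>
        ENNReal.ofReal lam * nuG γ
          {p : ℝ × ℝ | lam₀ * |p.1 - p.2| ^ (1 + γ) ≤ |fi i p.1 - fi i p.2|}) Filter.atTop ≤
      FG γ lam f Set.univ :=
  stmt12_general γ lam lam₀ hγ hlam hlam₀ L₁ L₂ f fi hf hfi hfi0 hfi1 hconv
end

section
/- Let γ > 0, let Ω ⊂ ℝ be open with Ω = ⋃_{k=1}^∞ Ω_k a decomposition into pairwise disjoint open intervals (possibly empty), and let f ∈ L¹_loc(Ω) with Var(f,Ω) < ∞. Then liminf_{λ→∞} F_{γ,λ}(f,Ω) ≥ ∑_{k=1}^∞ liminf_{λ→∞} F_{γ,λ}(f,Ω_k). -/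
open MeasureTheory Filter Set
open scoped ENNReal Topology

/-- The variation `Var(f,Ω) = sup {∫_Ω f φ' dx : φ ∈ C¹_c(Ω), |φ| ≤ 1}`. -/
noncomputable def Var1 (f : ℝ → ℝ) (Ω : Set ℝ) : ℝ≥0∞ :=
  ⨆ (φ : ℝ → ℝ) (_ : ContDiff ℝ 1 φ) (_ : HasCompactSupport φ)
    (_ : tsupport φ ⊆ Ω) (_ : ∀ x, |φ x| ≤ 1),
    ENNReal.ofReal (∫ x in Ω, f x * deriv φ x)

/-!
The sets `Ωₖ × Ωₖ` are pairwise disjoint, and on `Ωₖ × Ωₖ` the sets `E_{γ,λ}(f,Ωₖ)` and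
`E_{γ,λ}(f,Ω)` coincide, so `∑ₖ F_{γ,λ}(f,Ωₖ) ≤ F_{γ,λ}(f,Ω)` for every `λ`. The liminf
inequality follows because a series of liminfs in `ℝ≥0∞` is at most the liminf of the series.
-/

theorem ENNReal.liminf_add_liminf_le {α : Type*} {F : Filter α} (u v : α → ℝ≥0∞) :
    liminf u F + liminf v F ≤ liminf (u + v) F := by
  have (w : α → ℝ≥0∞) : Nonempty {a | ∀ᶠ x in F, a ≤ w x} :=
    ⟨0, .of_forall fun _ => zero_le⟩
  rw [liminf_eq, liminf_eq, sSup_eq_iSup', sSup_eq_iSup']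
  exact ENNReal.iSup_add_iSup_le fun a b =>
    le_liminf_of_le (by isBoundedDefault) ((a.2.and b.2).mono fun x hx => add_le_add hx.1 hx.2)

theorem ENNReal.sum_liminf_le_liminf_sum {ι α : Type*} {F : Filter α} (s : Finset ι)
    (u : ι → α → ℝ≥0∞) :
    ∑ i ∈ s, liminf (u i) F ≤ liminf (fun a => ∑ i ∈ s, u i a) F := by
  classical
  induction s using Finset.induction with
  | empty => simp
  | insert i s hi ih =>
    simp only [Finset.sum_insert hi]
    exact (add_le_add_right ih _).trans (ENNReal.liminf_add_liminf_le _ _)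

theorem ENNReal.tsum_liminf_le_liminf_tsum {ι α : Type*} {F : Filter α} (u : ι → α → ℝ≥0∞) :
    ∑' i, liminf (u i) F ≤ liminf (fun a => ∑' i, u i a) F := by
  rw [ENNReal.tsum_eq_iSup_sum]
  exact iSup_le fun s => (ENNReal.sum_liminf_le_liminf_sum s u).trans <|
    liminf_le_liminf (Eventually.of_forall fun a => ENNReal.sum_le_tsum s)

theorem tsum_setLIntegral_le_lintegral {α ι : Type*} [MeasurableSpace α] [Countable ι]
    {μ : Measure α} {B : ι → Set α} (hB : ∀ i, MeasurableSet (B i))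
    (hd : Pairwise (Function.onFun Disjoint B)) (g : α → ℝ≥0∞) :
    ∑' i, ∫⁻ x in B i, g x ∂μ ≤ ∫⁻ x, g x ∂μ := by
  rw [← lintegral_iUnion hB hd]
  exact setLIntegral_le_lintegral _ _

theorem EG_eq_inter_prod {γ lam : ℝ} {f : ℝ → ℝ} {U Ω : Set ℝ} (hU : U ⊆ Ω) :
    EG γ lam f U = EG γ lam f Ω ∩ U ×ˢ U := by
  ext p
  simp only [EG, mem_inter_iff, mem_ofPred_eq, mem_prod]
  exact ⟨fun ⟨h₁, h₂, h⟩ => ⟨⟨hU h₁, hU h₂, h⟩, h₁, h₂⟩, fun ⟨⟨_, _, h⟩, h₁, h₂⟩ => ⟨h₁, h₂, h⟩⟩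

theorem tsum_FG_le_FG {ι : Type*} [Countable ι] (γ lam : ℝ) (f : ℝ → ℝ) {Ω : Set ℝ}
    {U : ι → Set ℝ} (hU : ∀ i, MeasurableSet (U i)) (hd : Pairwise (Function.onFun Disjoint U))
    (hUΩ : ∀ i, U i ⊆ Ω) :
    ∑' i, FG γ lam f (U i) ≤ FG γ lam f Ω := by
  have hnu : ∀ i, nuG γ (EG γ lam f (U i)) = ∫⁻ p in U i ×ˢ U i,
      ENNReal.ofReal (|p.1 - p.2| ^ (γ - 1)) ∂volume.restrict (EG γ lam f Ω) := fun i => by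
    rw [nuG, EG_eq_inter_prod (hUΩ i), Measure.restrict_restrict ((hU i).prod (hU i)),
      inter_comm]
  simp only [FG, ENNReal.tsum_mul_left, hnu]
  gcongr
  exact tsum_setLIntegral_le_lintegral (fun i => (hU i).prod (hU i))
    (fun i j hij => (hd hij).set_prod_left _ _) _

theorem stmt14_general (γ : ℝ) (Ω : Set ℝ)
    (Ωk : ℕ → Set ℝ) (hOpen : ∀ k, IsOpen (Ωk k))
    (hdisj : Pairwise (Function.onFun Disjoint Ωk)) (hUnion : Ω = ⋃ k, Ωk k)
    (f : ℝ → ℝ) :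
    ∑' k : ℕ, Filter.liminf (fun lam : ℝ => FG γ lam f (Ωk k)) Filter.atTop ≤
      Filter.liminf (fun lam : ℝ => FG γ lam f Ω) Filter.atTop := by
  have hsub : ∀ k, Ωk k ⊆ Ω := fun k => hUnion ▸ subset_iUnion Ωk k
  calc _ ≤ liminf (fun lam : ℝ => ∑' k, FG γ lam f (Ωk k)) atTop :=
        ENNReal.tsum_liminf_le_liminf_tsum _
    _ ≤ _ := liminf_le_liminf <| Eventually.of_forall fun lam =>
        tsum_FG_le_FG γ lam f (fun k => (hOpen k).measurableSet) hdisj hsub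

/-- Let `γ > 0`, let `Ω ⊆ ℝ` be open with `Ω = ⋃ k, Ω k` a decomposition into pairwise
disjoint open intervals (i.e. open order-connected sets, possibly empty), and let
`f ∈ L¹_loc(Ω)` with `Var(f,Ω) < ∞`. Then
`liminf_{λ→∞} F_{γ,λ}(f,Ω) ≥ ∑_{k=1}^∞ liminf_{λ→∞} F_{γ,λ}(f,Ω_k)`. -/
theorem stmt14 (γ : ℝ) (hγ : 0 < γ) (Ω : Set ℝ) (hΩ : IsOpen Ω)
    (Ωk : ℕ → Set ℝ) (hOpen : ∀ k, IsOpen (Ωk k)) (hInt : ∀ k, (Ωk k).OrdConnected)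
    (hdisj : Pairwise (Function.onFun Disjoint Ωk)) (hUnion : Ω = ⋃ k, Ωk k)
    (f : ℝ → ℝ) (hf : LocallyIntegrableOn f Ω) (hVar : Var1 f Ω < ⊤) :
    ∑' k : ℕ, Filter.liminf (fun lam : ℝ => FG γ lam f (Ωk k)) Filter.atTop ≤
      Filter.liminf (fun lam : ℝ => FG γ lam f Ω) Filter.atTop :=
  stmt14_general γ Ω Ωk hOpen hdisj hUnion f
end
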